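/- Let f : [0,1] → ℝⁿ be a smooth regular curve with curvature vector κ. Then for every k ∈ ℕ there is a constant C = C(n,k) such that ‖κ‖_{k,2} ≤ C(‖∇ₛᵏκ‖₂ + ‖κ‖₂). -/

import Mathlib

open scoped RealInnerProductSpace
open MeasureTheory

noncomputable section

abbrev En (n : ℕ) := EuclideanSpace ℝ (Fin n)

variable {n : ℕ}

/-- Arc-length derivative along `f`. -/
def aD (f g : ℝ → En n) : ℝ → En n := fun x => ‖deriv f x‖⁻¹ • deriv g x

/-- Iterated arc-length derivative. -/
def aDIter (f : ℝ → En n) : ℕ → (ℝ → En n) → ℝ → En n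
  | 0, g => g
  | k + 1, g => aD f (aDIter f k g)

/-- Unit tangent vector. -/
def tang (f : ℝ → En n) : ℝ → En n := aD f f

/-- Curvature vector. -/
def curv (f : ℝ → En n) : ℝ → En n := aD f (tang f)

/-- Normal component of the arc-length derivative of a vector field along `f`. -/
def nS (f g : ℝ → En n) : ℝ → En n :=
  fun x => aD f g x - ⟪aD f g x, tang f x⟫ • tang f x

/-- Iterated normal arc-length derivative. -/
def nSIter (f : ℝ → En n) : ℕ → (ℝ → En n) → ℝ → En n
  | 0, g => g
  | k + 1, g => nS f (nSIter f k g)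

/-- Arc-length derivative of a scalar field along `f`. -/
def aDS (f : ℝ → En n) (g : ℝ → ℝ) : ℝ → ℝ := fun x => ‖deriv f x‖⁻¹ * deriv g x

/-- Length of the curve. -/
def len (f : ℝ → En n) : ℝ := ∫ x in (0:ℝ)..1, ‖deriv f x‖

/-- Willmore–Helfrich energy. -/
def WH (lam : ℝ) (ζ : En n) (f : ℝ → En n) : ℝ :=
  (∫ x in (0:ℝ)..1, ((1/2) * ‖curv f x‖ ^ 2 - ⟪curv f x, ζ⟫) * ‖deriv f x‖) + lam * len f

/-- Time derivative of a time dependent field. -/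
def pT (g : ℝ → ℝ → En n) : ℝ → ℝ → En n := fun t x => deriv (fun s => g s x) t

/-- Normal component (w.r.t. the curve `f t`) of the time derivative. -/
def nT (f g : ℝ → ℝ → En n) : ℝ → ℝ → En n :=
  fun t x => pT g t x - ⟪pT g t x, tang (f t) x⟫ • tang (f t) x

/-- Normal arc-length derivative of a time dependent field. -/
def nSF (f g : ℝ → ℝ → En n) : ℝ → ℝ → En n := fun t => nS (f t) (g t)

/-- Tangential component of the velocity. -/
def tanComp (f : ℝ → ℝ → En n) : ℝ → ℝ → ℝ := fun t x => ⟪pT f t x, tang (f t) x⟫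

/-- Normal velocity. -/
def normVel (f : ℝ → ℝ → En n) : ℝ → ℝ → En n :=
  fun t x => pT f t x - tanComp f t x • tang (f t) x

/-- Scale invariant `Lᵖ` norm of the `i`-th normal derivative of `g` along `f`. -/
def sN (f : ℝ → En n) (p : ℝ) (i : ℕ) (g : ℝ → En n) : ℝ :=
  len f ^ ((i : ℝ) + 1 - 1/p) * (∫ x in (0:ℝ)..1, ‖nSIter f i g x‖ ^ p * ‖deriv f x‖) ^ (1/p)

/-- Scale invariant Sobolev-type norm. -/
def sNk (f : ℝ → En n) (k : ℕ) (g : ℝ → En n) : ℝ :=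
  ∑ i ∈ Finset.range (k + 1), sN f 2 i g

/-!
Write `φⱼ = ∇ₛʲκ` and `xⱼ = Lʲ ‖φⱼ‖_{L²(ds)}`, so that `‖∇ₛʲκ‖₂ = L^{1/2} xⱼ`. All `φⱼ` are
normal to the curve, so `∂ₓ⟪φₐ, φ_b⟫ = |∂ₓf| (⟪φₐ₊₁, φ_b⟫ + ⟪φₐ, φ_b₊₁⟫)`. Comparing `|φⱼ|²` with
its minimum, which is at most its mean, gives `sup |φⱼ|² ≤ ‖φⱼ‖² / L + 2 ‖φⱼ₊₁‖ ‖φⱼ‖`.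
Integrating by parts, `‖φₘ₊₁‖² = [⟪φₘ₊₁, φₘ⟫]₀¹ - ∫ ⟪φₘ₊₂, φₘ⟫ ds`; bounding the boundary terms
with the sup bound and the integral by Cauchy–Schwarz yields the one-step interpolation
`xₘ₊₁ ≤ ε xₘ₊₂ + 225 ε⁻¹ xₘ` for `0 < ε ≤ 1`. Iterating it with ever smaller `ε` bounds every
`xⱼ`, `j ≤ k`, by a multiple of `x₀ + xₖ` depending only on `k`.
-/

open Set

theorem sq_integral_mul_mul_le {p q w : ℝ → ℝ} {a b : ℝ} (hab : a ≤ b)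
    (hw : ∀ x ∈ Icc a b, 0 ≤ w x)
    (hpp : IntervalIntegrable (fun x => p x ^ 2 * w x) volume a b)
    (hpq : IntervalIntegrable (fun x => p x * q x * w x) volume a b)
    (hqq : IntervalIntegrable (fun x => q x ^ 2 * w x) volume a b) :
    (∫ x in a..b, p x * q x * w x) ^ 2
      ≤ (∫ x in a..b, p x ^ 2 * w x) * ∫ x in a..b, q x ^ 2 * w x := by
  have hquad : ∀ t : ℝ, 0 ≤ (∫ x in a..b, p x ^ 2 * w x) * (t * t)
      + (-2 * ∫ x in a..b, p x * q x * w x) * t + ∫ x in a..b, q x ^ 2 * w x := by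
    intro t
    have hexp : ∫ x in a..b, (t * p x - q x) ^ 2 * w x
        = (∫ x in a..b, p x ^ 2 * w x) * (t * t)
          + (-2 * ∫ x in a..b, p x * q x * w x) * t + ∫ x in a..b, q x ^ 2 * w x := by
      have e : (fun x => (t * p x - q x) ^ 2 * w x) = fun x =>
          (t * t) * (p x ^ 2 * w x) + (-2 * t) * (p x * q x * w x) + q x ^ 2 * w x := by
        funext x; ring
      rw [e, intervalIntegral.integral_add ((hpp.const_mul _).add (hpq.const_mul _)) hqq,
        intervalIntegral.integral_add (hpp.const_mul _) (hpq.const_mul _),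
        intervalIntegral.integral_const_mul, intervalIntegral.integral_const_mul]
      ring
    rw [← hexp]
    exact intervalIntegral.integral_nonneg hab fun x hx => mul_nonneg (sq_nonneg _) (hw x hx)
  have := discrim_le_zero hquad
  rw [discrim] at this
  linarith

theorem abs_integral_le_integral_abs_of_mem_Icc {F : ℝ → ℝ} {a b y z : ℝ} (hy : y ∈ Icc a b)
    (hz : z ∈ Icc a b) (hF : IntervalIntegrable F volume a b) :
    |∫ t in y..z, F t| ≤ ∫ t in a..b, |F t| := by
  have hab : a ≤ b := hy.1.trans hy.2
  have hsub : uIcc y z ⊆ uIcc a b := uIcc_of_le hab ▸ uIcc_subset_Icc hy hz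
  calc |∫ t in y..z, F t| ≤ |(∫ t in y..z, |F t|)| := by
        simpa using intervalIntegral.norm_integral_le_abs_integral_norm (f := F) (a := y) (b := z)
    _ ≤ |(∫ t in a..b, |F t|)| :=
        intervalIntegral.abs_integral_mono_interval (uIoc_subset_uIoc_of_uIcc_subset_uIcc hsub)
          (ae_of_all _ fun t => abs_nonneg (F t)) hF.abs
    _ = ∫ t in a..b, |F t| :=
        abs_of_nonneg (intervalIntegral.integral_nonneg hab fun t _ => abs_nonneg (F t))

theorem two_mul_sqrt_mul_le {P Q δ : ℝ} (hP : 0 ≤ P) (hQ : 0 ≤ Q) (hδ : 0 < δ) :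
    2 * √(P * Q) ≤ δ * P + Q / δ := by
  have e : δ * P + Q / δ - 2 * √(P * Q) = (δ * √P - √Q) ^ 2 / δ := by
    rw [Real.sqrt_mul hP]
    field_simp
    rw [sub_sq, mul_pow, Real.sq_sqrt hP, Real.sq_sqrt hQ]
    ring
  have : 0 ≤ (δ * √P - √Q) ^ 2 / δ := by positivity
  linarith

theorem le_mul_add_div_mul_of_sq_le {a b c ε : ℝ} (ha : 0 ≤ a) (hb : 0 ≤ b) (hc : 0 ≤ c)
    (h : b ^ 2 ≤ 2 * √((b ^ 2 + 2 * b * c) * (a ^ 2 + 2 * a * b)) + c * a)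
    (hε : 0 < ε) (hε1 : ε ≤ 1) :
    b ≤ ε * c + 225 / ε * a := by
  -- AM–GM with weight `ε / 15`; the constant `225 = 15 ^ 2` comes from here
  have hamgm := two_mul_sqrt_mul_le (P := b ^ 2 + 2 * b * c) (Q := a ^ 2 + 2 * a * b)
    (by positivity) (by positivity) (by positivity : 0 < ε / 15)
  -- in `u = ε b` and `v = ε² c` the inequality becomes homogeneous of degree two
  have hquad : (ε * b) ^ 2 ≤ ε / 15 * (ε * b) ^ 2 + 2 / 15 * (ε * b) * (ε ^ 2 * c)
      + 15 * ε * a ^ 2 + 30 * a * (ε * b) + (ε ^ 2 * c) * a := by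
    have hb2 : b ^ 2 ≤ ε / 15 * (b ^ 2 + 2 * b * c) + (a ^ 2 + 2 * a * b) / (ε / 15) + c * a := by
      linarith
    have e : ε ^ 2 * (ε / 15 * (b ^ 2 + 2 * b * c) + (a ^ 2 + 2 * a * b) / (ε / 15) + c * a)
        = ε / 15 * (ε * b) ^ 2 + 2 / 15 * (ε * b) * (ε ^ 2 * c) + 15 * ε * a ^ 2
          + 30 * a * (ε * b) + (ε ^ 2 * c) * a := by
      field_simp
      ring
    nlinarith [mul_le_mul_of_nonneg_left hb2 (sq_nonneg ε)]
  have hlin : ε * b ≤ ε ^ 2 * c + 225 * a := by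
    by_contra! hlt
    have hu : 0 < ε * b := lt_of_le_of_lt (by positivity) hlt
    nlinarith [mul_le_mul_of_nonneg_left hε1 (sq_nonneg a),
      mul_le_mul_of_nonneg_right hε1 (sq_nonneg (ε * b)), mul_lt_mul_of_pos_left hlt hu,
      mul_nonneg (by positivity : (0:ℝ) ≤ ε ^ 2 * c) ha]
  calc b = ε * b / ε := by field_simp
    _ ≤ (ε ^ 2 * c + 225 * a) / ε := by gcongr
    _ = ε * c + 225 / ε * a := by field_simp

theorem mul_le_mul_add_div_mul_of_sq_le {a b c L ε : ℝ} (ha : 0 ≤ a) (hb : 0 ≤ b) (hc : 0 ≤ c)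
    (hL : 0 < L) (h : b ^ 2 ≤ 2 * √((b ^ 2 / L + 2 * (c * b)) * (a ^ 2 / L + 2 * (b * a))) + c * a)
    (hε : 0 < ε) (hε1 : ε ≤ 1) :
    L * b ≤ ε * (L ^ 2 * c) + 225 / ε * a := by
  refine le_mul_add_div_mul_of_sq_le ha (by positivity) (by positivity) ?_ hε hε1
  have e : ((L * b) ^ 2 + 2 * (L * b) * (L ^ 2 * c)) * (a ^ 2 + 2 * a * (L * b))
      = (L ^ 2) ^ 2 * ((b ^ 2 / L + 2 * (c * b)) * (a ^ 2 / L + 2 * (b * a))) := by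
    field_simp
  rw [e, Real.sqrt_mul (by positivity), Real.sqrt_sq (by positivity)]
  linarith [mul_le_mul_of_nonneg_left h (sq_nonneg L)]

def Interpolating (K : ℝ) (x : ℕ → ℝ) : Prop :=
  (∀ i, 0 ≤ x i) ∧ ∀ i ε, 0 < ε → ε ≤ 1 → x (i + 1) ≤ ε * x (i + 2) + K / ε * x i

namespace Interpolating

variable {K : ℝ}

theorem exists_le_mul_add (hK : 0 ≤ K) (j : ℕ) :
    ∀ δ, 0 < δ → δ ≤ 1 → ∃ c, ∀ x, Interpolating K x → x (j + 1) ≤ δ * x (j + 2) + c * x 0 := by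
  induction j with
  | zero => exact fun δ _ _ => ⟨K / δ, fun x hx => hx.2 0 δ ‹_› ‹_›⟩
  | succ j ih =>
    intro δ hδ hδ1
    obtain ⟨c, hc⟩ := ih (δ / (4 * K + 1)) (by positivity)
      (div_le_of_le_mul₀ (by positivity) (by positivity) (by nlinarith))
    refine ⟨4 * K / δ * c, fun x hx => ?_⟩
    have hstep : x (j + 2) ≤ δ / 2 * x (j + 3) + 2 * K / δ * x (j + 1) := by
      convert hx.2 (j + 1) (δ / 2) (by positivity) (by linarith) using 3
      field_simp
    have hprev := mul_le_mul_of_nonneg_left (hc x hx) (by positivity : 0 ≤ 2 * K / δ)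
    -- the multiple of `x (j + 2)` brought in by the induction hypothesis is absorbed on the left
    have habsorb : 2 * K / δ * (δ / (4 * K + 1) * x (j + 2)) ≤ x (j + 2) / 2 := by
      have e : 2 * K / δ * (δ / (4 * K + 1)) = 2 * K / (4 * K + 1) := by field_simp
      rw [← mul_assoc, e, div_mul_eq_mul_div, div_le_div_iff₀ (by positivity) two_pos]
      nlinarith [hx.1 (j + 2)]
    have e : 4 * K / δ * c * x 0 = 2 * (2 * K / δ * (c * x 0)) := by ring
    rw [mul_add] at hprev
    linarith

theorem exists_le_add (hK : 0 ≤ K) (k : ℕ) :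
    ∃ c, ∀ x, Interpolating K x → x k ≤ x (k + 1) + c * x 0 := by
  cases k with
  | zero => exact ⟨1, fun x hx => by linarith [hx.1 1]⟩
  | succ j =>
    obtain ⟨c, hc⟩ := exists_le_mul_add hK j 1 one_pos le_rfl
    exact ⟨c, fun x hx => by simpa using hc x hx⟩

theorem exists_sum_le (hK : 0 ≤ K) (k : ℕ) :
    ∃ C, 0 < C ∧ ∀ x, Interpolating K x →
      ∑ i ∈ Finset.range (k + 1), x i ≤ C * (x 0 + x k) := by
  induction k with
  | zero =>
    refine ⟨1, one_pos, fun x hx => ?_⟩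
    rw [zero_add, Finset.sum_range_one, one_mul]
    linarith [hx.1 0]
  | succ k ih =>
    obtain ⟨C, hC, hsum⟩ := ih
    obtain ⟨c, hc⟩ := exists_le_add hK k
    refine ⟨C * (1 + |c|) + 1, by positivity, fun x hx => ?_⟩
    have hxk : x k ≤ x (k + 1) + |c| * x 0 :=
      (hc x hx).trans (by gcongr; exacts [hx.1 0, le_abs_self c])
    calc ∑ i ∈ Finset.range (k + 1 + 1), x i
        = ∑ i ∈ Finset.range (k + 1), x i + x (k + 1) := Finset.sum_range_succ _ _
      _ ≤ C * (x 0 + (x (k + 1) + |c| * x 0)) + x (k + 1) := by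
        gcongr
        exact (hsum x hx).trans (by gcongr)
      _ ≤ (C * (1 + |c|) + 1) * (x 0 + x (k + 1)) := by
        nlinarith [hx.1 0, mul_nonneg (mul_nonneg hC.le (abs_nonneg c)) (hx.1 (k + 1))]

end Interpolating

def regularSet (f : ℝ → En n) : Set ℝ := {x | deriv f x ≠ 0}

section Smoothness

variable {f g : ℝ → En n} {x : ℝ}

theorem isOpen_regularSet (hf : ContDiff ℝ (⊤ : ℕ∞) f) : IsOpen (regularSet f) :=
  isOpen_ne_fun (hf.continuous_deriv (by simp)) continuous_const

theorem differentiableAt_of_contDiffOn_regularSet (hf : ContDiff ℝ (⊤ : ℕ∞) f)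
    (hg : ContDiffOn ℝ (⊤ : ℕ∞) g (regularSet f)) (hx : x ∈ regularSet f) :
    DifferentiableAt ℝ g x :=
  (hg.differentiableOn (by simp)).differentiableAt ((isOpen_regularSet hf).mem_nhds hx)

theorem contDiffOn_aD (hf : ContDiff ℝ (⊤ : ℕ∞) f)
    (hg : ContDiffOn ℝ (⊤ : ℕ∞) g (regularSet f)) :
    ContDiffOn ℝ (⊤ : ℕ∞) (aD f g) (regularSet f) :=
  have hinv : ContDiffOn ℝ (⊤ : ℕ∞) (fun x => ‖deriv f x‖⁻¹) (regularSet f) :=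
    ((contDiff_infty_iff_deriv.mp hf).2.contDiffOn.norm ℝ fun _ hx => hx).inv
      fun _ hx => norm_ne_zero_iff.mpr hx
  hinv.smul (hg.deriv_of_isOpen (isOpen_regularSet hf) (by simp))

theorem contDiffOn_nS (hf : ContDiff ℝ (⊤ : ℕ∞) f)
    (hg : ContDiffOn ℝ (⊤ : ℕ∞) g (regularSet f)) :
    ContDiffOn ℝ (⊤ : ℕ∞) (nS f g) (regularSet f) := by
  have hτ := contDiffOn_aD hf hf.contDiffOn
  have hD := contDiffOn_aD hf hg
  exact hD.sub ((hD.inner ℝ hτ).smul hτ)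

theorem contDiffOn_nSIter (hf : ContDiff ℝ (⊤ : ℕ∞) f)
    (hg : ContDiffOn ℝ (⊤ : ℕ∞) g (regularSet f)) (j : ℕ) :
    ContDiffOn ℝ (⊤ : ℕ∞) (nSIter f j g) (regularSet f) := by
  induction j with
  | zero => exact hg
  | succ j ih => exact contDiffOn_nS hf ih

theorem contDiffOn_curv (hf : ContDiff ℝ (⊤ : ℕ∞) f) :
    ContDiffOn ℝ (⊤ : ℕ∞) (curv f) (regularSet f) :=
  contDiffOn_aD hf (contDiffOn_aD hf hf.contDiffOn)

end Smoothness

section Frame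

variable {f g h : ℝ → En n} {x : ℝ}

theorem norm_tang (hx : x ∈ regularSet f) : ‖tang f x‖ = 1 := by
  rw [tang, aD, norm_smul, norm_inv, norm_norm, inv_mul_cancel₀ (norm_ne_zero_iff.mpr hx)]

theorem inner_nS_tang (hx : x ∈ regularSet f) : ⟪nS f g x, tang f x⟫ = 0 := by
  rw [nS, inner_sub_left, real_inner_smul_left, real_inner_self_eq_norm_sq, norm_tang hx]
  ring

-- differentiate `⟪τ, τ⟫ = 1` on the open set of regular points
theorem inner_curv_tang (hf : ContDiff ℝ (⊤ : ℕ∞) f) (hx : x ∈ regularSet f) :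
    ⟪curv f x, tang f x⟫ = 0 := by
  have hτ : HasDerivAt (tang f) (deriv (tang f) x) x :=
    (differentiableAt_of_contDiffOn_regularSet hf (contDiffOn_aD hf hf.contDiffOn) hx).hasDerivAt
  have hconst : (fun y => ⟪tang f y, tang f y⟫) =ᶠ[nhds x] fun _ => 1 := by
    filter_upwards [(isOpen_regularSet hf).mem_nhds hx] with y hy
    rw [real_inner_self_eq_norm_sq, norm_tang hy, one_pow]
  have h0 := (hτ.inner ℝ hτ).deriv
  rw [hconst.deriv_eq, deriv_const, real_inner_comm (tang f x)] at h0
  have h1 : ⟪tang f x, deriv (tang f) x⟫ = 0 := by linarith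
  rw [curv, aD, real_inner_smul_left, real_inner_comm, h1, mul_zero]

theorem inner_nSIter_curv_tang (hf : ContDiff ℝ (⊤ : ℕ∞) f) (hx : x ∈ regularSet f) :
    ∀ j, ⟪nSIter f j (curv f) x, tang f x⟫ = 0
  | 0 => inner_curv_tang hf hx
  | _ + 1 => inner_nS_tang hx

theorem inner_deriv_of_inner_tang_eq_zero {ψ : En n} (hx : x ∈ regularSet f)
    (hψ : ⟪ψ, tang f x⟫ = 0) :
    ⟪deriv g x, ψ⟫ = ‖deriv f x‖ * ⟪nS f g x, ψ⟫ := by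
  rw [real_inner_comm] at hψ
  rw [nS, aD, inner_sub_left, real_inner_smul_left, real_inner_smul_left, hψ, mul_zero,
    sub_zero, ← mul_assoc, mul_inv_cancel₀ (norm_ne_zero_iff.mpr hx),
    one_mul]

theorem hasDerivAt_inner_of_normal (hx : x ∈ regularSet f) (hg : DifferentiableAt ℝ g x)
    (hh : DifferentiableAt ℝ h x) (hgn : ⟪g x, tang f x⟫ = 0) (hhn : ⟪h x, tang f x⟫ = 0) :
    HasDerivAt (fun y => ⟪g y, h y⟫) (‖deriv f x‖ * (⟪nS f g x, h x⟫ + ⟪g x, nS f h x⟫)) x := by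
  refine (hg.hasDerivAt.inner ℝ hh.hasDerivAt).congr_deriv ?_
  rw [inner_deriv_of_inner_tang_eq_zero hx hhn, real_inner_comm,
    inner_deriv_of_inner_tang_eq_zero hx hgn, real_inner_comm (g x)]
  ring

end Frame

section ArcLengthL2

variable {f g u v : ℝ → En n}

def arcL2 (f g : ℝ → En n) : ℝ := √(∫ x in (0:ℝ)..1, ‖g x‖ ^ 2 * ‖deriv f x‖)

theorem sq_arcL2 (f g : ℝ → En n) :
    arcL2 f g ^ 2 = ∫ x in (0:ℝ)..1, ‖g x‖ ^ 2 * ‖deriv f x‖ :=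
  Real.sq_sqrt (intervalIntegral.integral_nonneg zero_le_one fun _ _ => by positivity)

theorem len_nonneg (f : ℝ → En n) : 0 ≤ len f :=
  intervalIntegral.integral_nonneg zero_le_one fun _ _ => norm_nonneg _

theorem continuous_norm_deriv (hf : ContDiff ℝ (⊤ : ℕ∞) f) : Continuous fun x => ‖deriv f x‖ :=
  (hf.continuous_deriv (by simp)).norm

theorem len_pos (hf : ContDiff ℝ (⊤ : ℕ∞) f) (hreg : Icc (0:ℝ) 1 ⊆ regularSet f) :
    0 < len f :=
  intervalIntegral.intervalIntegral_pos_of_pos_on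
    ((continuous_norm_deriv hf).intervalIntegrable _ _)
    (fun _ hx => norm_pos_iff.mpr (hreg (Ioo_subset_Icc_self hx))) zero_lt_one

theorem sN_two (f g : ℝ → En n) (i : ℕ) :
    sN f 2 i g = len f ^ (1 / 2 : ℝ) * (len f ^ i * arcL2 f (nSIter f i g)) := by
  have hexp : (i : ℝ) + 1 - 1 / 2 = 1 / 2 + i := by ring
  simp only [sN, arcL2, Real.rpow_two, Real.sqrt_eq_rpow, hexp]
  rw [Real.rpow_add' (len_nonneg f) (by positivity), Real.rpow_natCast, mul_assoc]

theorem integral_norm_mul_norm_le_arcL2 (hf : ContDiff ℝ (⊤ : ℕ∞) f)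
    (hu : ContinuousOn u (Icc 0 1)) (hv : ContinuousOn v (Icc 0 1)) :
    ∫ x in (0:ℝ)..1, ‖u x‖ * ‖v x‖ * ‖deriv f x‖ ≤ arcL2 f u * arcL2 f v := by
  have hw := (continuous_norm_deriv hf).continuousOn (s := Icc 0 1)
  rw [arcL2, arcL2, ← Real.sqrt_mul (intervalIntegral.integral_nonneg zero_le_one
    fun _ _ => by positivity)]
  refine (le_abs_self _).trans (Real.abs_le_sqrt (sq_integral_mul_mul_le zero_le_one
    (fun _ _ => norm_nonneg _) ?_ ?_ ?_)) <;>
  refine ContinuousOn.intervalIntegrable_of_Icc zero_le_one ?_ <;> fun_prop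

theorem exists_sq_norm_le_sq_arcL2_div_len (hf : ContDiff ℝ (⊤ : ℕ∞) f)
    (hreg : Icc (0:ℝ) 1 ⊆ regularSet f) (hg : ContinuousOn g (Icc 0 1)) :
    ∃ y ∈ Icc (0:ℝ) 1, ‖g y‖ ^ 2 ≤ arcL2 f g ^ 2 / len f := by
  have hw := (continuous_norm_deriv hf).continuousOn (s := Icc 0 1)
  obtain ⟨y, hy, hmin⟩ := isCompact_Icc.exists_isMinOn (nonempty_Icc.mpr zero_le_one)
    (hg.norm.pow 2)
  refine ⟨y, hy, ?_⟩
  rw [le_div_iff₀ (len_pos hf hreg), sq_arcL2, len, ← intervalIntegral.integral_const_mul]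
  exact intervalIntegral.integral_mono_on zero_le_one
    (ContinuousOn.intervalIntegrable_of_Icc zero_le_one (by fun_prop))
    (ContinuousOn.intervalIntegrable_of_Icc zero_le_one (by fun_prop))
    fun x hx => mul_le_mul_of_nonneg_right (hmin hx) (norm_nonneg _)

theorem sq_norm_le_of_inner_tang_eq_zero (hf : ContDiff ℝ (⊤ : ℕ∞) f)
    (hreg : Icc (0:ℝ) 1 ⊆ regularSet f) (hg : ContDiffOn ℝ (⊤ : ℕ∞) g (regularSet f))
    (hgn : ∀ x ∈ Icc (0:ℝ) 1, ⟪g x, tang f x⟫ = 0) {z : ℝ} (hz : z ∈ Icc (0:ℝ) 1) :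
    ‖g z‖ ^ 2 ≤ arcL2 f g ^ 2 / len f + 2 * (arcL2 f (nS f g) * arcL2 f g) := by
  have hgc : ContinuousOn g (Icc 0 1) := hg.continuousOn.mono hreg
  have hDgc : ContinuousOn (nS f g) (Icc 0 1) := (contDiffOn_nS hf hg).continuousOn.mono hreg
  have hw := (continuous_norm_deriv hf).continuousOn (s := Icc 0 1)
  obtain ⟨y₀, hy₀, hmean⟩ := exists_sq_norm_le_sq_arcL2_div_len hf hreg hgc
  set F : ℝ → ℝ := fun y => 2 * (⟪nS f g y, g y⟫ * ‖deriv f y‖)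
  have hF : ContinuousOn F (Icc 0 1) := by fun_prop
  have hftc : ∫ y in y₀..z, F y = ‖g z‖ ^ 2 - ‖g y₀‖ ^ 2 := by
    simp only [← real_inner_self_eq_norm_sq]
    refine intervalIntegral.integral_eq_sub_of_hasDerivAt (f := fun y => ⟪g y, g y⟫)
      (fun y hy => ?_)
      ((hF.mono (uIcc_subset_Icc hy₀ hz)).intervalIntegrable)
    have hy := uIcc_subset_Icc hy₀ hz hy
    have hgd := differentiableAt_of_contDiffOn_regularSet hf hg (hreg hy)
    refine (hasDerivAt_inner_of_normal (hreg hy) hgd hgd (hgn y hy) (hgn y hy)).congr_deriv ?_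
    simp only [F, real_inner_comm (nS f g y)]
    ring
  have hFint : ∫ y in (0:ℝ)..1, |F y| ≤ 2 * (arcL2 f (nS f g) * arcL2 f g) :=
    calc ∫ y in (0:ℝ)..1, |F y|
        ≤ ∫ y in (0:ℝ)..1, 2 * (‖nS f g y‖ * ‖g y‖ * ‖deriv f y‖) := by
          refine intervalIntegral.integral_mono_on zero_le_one
            (ContinuousOn.intervalIntegrable_of_Icc zero_le_one hF.abs)
            (ContinuousOn.intervalIntegrable_of_Icc zero_le_one (by fun_prop)) fun y _ => ?_
          simp only [F, abs_mul, abs_two, abs_norm]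
          gcongr
          exact abs_real_inner_le_norm _ _
      _ ≤ 2 * (arcL2 f (nS f g) * arcL2 f g) := by
          rw [intervalIntegral.integral_const_mul]
          gcongr
          exact integral_norm_mul_norm_le_arcL2 hf hDgc hgc
  have hosc := abs_integral_le_integral_abs_of_mem_Icc hy₀ hz
    (ContinuousOn.intervalIntegrable_of_Icc zero_le_one hF)
  linarith [le_abs_self (∫ y in y₀..z, F y)]

theorem sq_arcL2_nS_eq (hf : ContDiff ℝ (⊤ : ℕ∞) f) (hreg : Icc (0:ℝ) 1 ⊆ regularSet f)
    (hg : ContDiffOn ℝ (⊤ : ℕ∞) g (regularSet f))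
    (hgn : ∀ x ∈ Icc (0:ℝ) 1, ⟪g x, tang f x⟫ = 0) :
    arcL2 f (nS f g) ^ 2 = ⟪nS f g 1, g 1⟫ - ⟪nS f g 0, g 0⟫
      - ∫ x in (0:ℝ)..1, ⟪nS f (nS f g) x, g x⟫ * ‖deriv f x‖ := by
  have hDg := contDiffOn_nS hf hg
  have hgc : ContinuousOn g (Icc 0 1) := hg.continuousOn.mono hreg
  have hDgc : ContinuousOn (nS f g) (Icc 0 1) := hDg.continuousOn.mono hreg
  have hD2gc : ContinuousOn (nS f (nS f g)) (Icc 0 1) :=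
    (contDiffOn_nS hf hDg).continuousOn.mono hreg
  have hw := (continuous_norm_deriv hf).continuousOn (s := Icc 0 1)
  have hftc := intervalIntegral.integral_eq_sub_of_hasDerivAt
    (f := fun y => ⟪nS f g y, g y⟫)
    (f' := fun y => ⟪nS f (nS f g) y, g y⟫ * ‖deriv f y‖ + ‖nS f g y‖ ^ 2 * ‖deriv f y‖)
    (a := 0) (b := 1) (fun y hy => ?_)
    (ContinuousOn.intervalIntegrable_of_Icc zero_le_one (by fun_prop))
  · rw [intervalIntegral.integral_add
      (ContinuousOn.intervalIntegrable_of_Icc zero_le_one (by fun_prop))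
      (ContinuousOn.intervalIntegrable_of_Icc zero_le_one (by fun_prop)), ← sq_arcL2] at hftc
    linarith
  · rw [uIcc_of_le zero_le_one] at hy
    refine (hasDerivAt_inner_of_normal (hreg hy)
      (differentiableAt_of_contDiffOn_regularSet hf hDg (hreg hy))
      (differentiableAt_of_contDiffOn_regularSet hf hg (hreg hy))
      (inner_nS_tang (hreg hy)) (hgn y hy)).congr_deriv ?_
    rw [real_inner_self_eq_norm_sq]
    ring

theorem sq_arcL2_nS_le (hf : ContDiff ℝ (⊤ : ℕ∞) f) (hreg : Icc (0:ℝ) 1 ⊆ regularSet f)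
    (hg : ContDiffOn ℝ (⊤ : ℕ∞) g (regularSet f))
    (hgn : ∀ x ∈ Icc (0:ℝ) 1, ⟪g x, tang f x⟫ = 0) :
    arcL2 f (nS f g) ^ 2 ≤
      2 * √((arcL2 f (nS f g) ^ 2 / len f + 2 * (arcL2 f (nS f (nS f g)) * arcL2 f (nS f g)))
        * (arcL2 f g ^ 2 / len f + 2 * (arcL2 f (nS f g) * arcL2 f g)))
      + arcL2 f (nS f (nS f g)) * arcL2 f g := by
  have hDg := contDiffOn_nS hf hg
  have hbdry : ∀ z ∈ Icc (0:ℝ) 1, |⟪nS f g z, g z⟫| ≤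
      √((arcL2 f (nS f g) ^ 2 / len f + 2 * (arcL2 f (nS f (nS f g)) * arcL2 f (nS f g)))
        * (arcL2 f g ^ 2 / len f + 2 * (arcL2 f (nS f g) * arcL2 f g))) := fun z hz =>
    calc |⟪nS f g z, g z⟫| ≤ ‖nS f g z‖ * ‖g z‖ := abs_real_inner_le_norm _ _
      _ ≤ _ := by
        have hsup_g := sq_norm_le_of_inner_tang_eq_zero hf hreg hg hgn hz
        have hsup_Dg := sq_norm_le_of_inner_tang_eq_zero hf hreg hDg
          (fun x hx => inner_nS_tang (hreg hx)) hz
        rw [Real.sqrt_mul ((sq_nonneg _).trans hsup_Dg)]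
        gcongr
        · exact Real.le_sqrt_of_sq_le hsup_Dg
        · exact Real.le_sqrt_of_sq_le hsup_g
  have hrest : |∫ x in (0:ℝ)..1, ⟪nS f (nS f g) x, g x⟫ * ‖deriv f x‖|
      ≤ arcL2 f (nS f (nS f g)) * arcL2 f g := by
    have hgc : ContinuousOn g (Icc 0 1) := hg.continuousOn.mono hreg
    have hD2gc : ContinuousOn (nS f (nS f g)) (Icc 0 1) :=
      (contDiffOn_nS hf hDg).continuousOn.mono hreg
    have hw := (continuous_norm_deriv hf).continuousOn (s := Icc 0 1)
    calc |∫ x in (0:ℝ)..1, ⟪nS f (nS f g) x, g x⟫ * ‖deriv f x‖|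
        ≤ ∫ x in (0:ℝ)..1, ‖nS f (nS f g) x‖ * ‖g x‖ * ‖deriv f x‖ := by
          rw [← Real.norm_eq_abs]
          refine intervalIntegral.norm_integral_le_of_norm_le zero_le_one
            (ae_of_all _ fun x _ => ?_)
            (ContinuousOn.intervalIntegrable_of_Icc zero_le_one (by fun_prop))
          rw [Real.norm_eq_abs, abs_mul, abs_norm]
          gcongr
          exact abs_real_inner_le_norm _ _
      _ ≤ arcL2 f (nS f (nS f g)) * arcL2 f g := integral_norm_mul_norm_le_arcL2 hf hD2gc hgc
  linarith [sq_arcL2_nS_eq hf hreg hg hgn, le_abs_self ⟪nS f g 1, g 1⟫, neg_abs_le ⟪nS f g 0, g 0⟫,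
    neg_abs_le (∫ x in (0:ℝ)..1, ⟪nS f (nS f g) x, g x⟫ * ‖deriv f x‖),
    hbdry 1 (right_mem_Icc.mpr zero_le_one), hbdry 0 (left_mem_Icc.mpr zero_le_one)]

end ArcLengthL2

theorem interpolating_arcL2_nSIter_curv {f : ℝ → En n} (hf : ContDiff ℝ (⊤ : ℕ∞) f)
    (hreg : Icc (0:ℝ) 1 ⊆ regularSet f) :
    Interpolating 225 fun j => len f ^ j * arcL2 f (nSIter f j (curv f)) := by
  refine ⟨fun j => mul_nonneg (pow_nonneg (len_nonneg f) j) (Real.sqrt_nonneg _),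
    fun i ε hε hε1 => ?_⟩
  have hstep := mul_le_mul_add_div_mul_of_sq_le (Real.sqrt_nonneg _) (Real.sqrt_nonneg _)
    (Real.sqrt_nonneg _) (len_pos hf hreg)
    (sq_arcL2_nS_le hf hreg (contDiffOn_nSIter hf (contDiffOn_curv hf) i)
      fun x hx => inner_nSIter_curv_tang hf (hreg hx) i) hε hε1
  calc len f ^ (i + 1) * arcL2 f (nSIter f (i + 1) (curv f))
      = len f ^ i * (len f * arcL2 f (nS f (nSIter f i (curv f)))) := by
        rw [pow_succ, mul_assoc]
        rfl
    _ ≤ len f ^ i * (ε * (len f ^ 2 * arcL2 f (nS f (nS f (nSIter f i (curv f)))))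
          + 225 / ε * arcL2 f (nSIter f i (curv f))) :=
        mul_le_mul_of_nonneg_left hstep (pow_nonneg (len_nonneg f) i)
    _ = ε * (len f ^ (i + 2) * arcL2 f (nS f (nS f (nSIter f i (curv f)))))
          + 225 / ε * (len f ^ i * arcL2 f (nSIter f i (curv f))) := by ring

theorem sobolev_norm_curvature_bound_general (n k : ℕ) :
    ∃ C : ℝ, 0 < C ∧
      ∀ f : ℝ → En n, ContDiff ℝ (⊤ : ℕ∞) f →
        (∀ x ∈ Set.Icc (0:ℝ) 1, deriv f x ≠ 0) →
        sNk f k (curv f) ≤ C * (sN f 2 k (curv f) + sN f 2 0 (curv f)) := by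
  obtain ⟨C, hC, hsum⟩ := Interpolating.exists_sum_le (by norm_num : (0:ℝ) ≤ 225) k
  refine ⟨C, hC, fun f hf hreg => ?_⟩
  have hbound := hsum _ (interpolating_arcL2_nSIter_curv hf hreg)
  simp only [sNk, sN_two, ← Finset.mul_sum]
  calc len f ^ (1 / 2 : ℝ) * ∑ i ∈ Finset.range (k + 1), len f ^ i * arcL2 f (nSIter f i (curv f))
      ≤ len f ^ (1 / 2 : ℝ) * (C * (len f ^ 0 * arcL2 f (nSIter f 0 (curv f))
          + len f ^ k * arcL2 f (nSIter f k (curv f)))) :=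
        mul_le_mul_of_nonneg_left hbound (Real.rpow_nonneg (len_nonneg f) _)
    _ = _ := by ring

/-- `‖κ‖ₖ,₂ ≤ C(‖∇ₛᵏκ‖₂ + ‖κ‖₂)` with `C = C(n,k)`. -/
theorem sobolev_norm_curvature_bound (n k : ℕ) (hn : 2 ≤ n) :
    ∃ C : ℝ, 0 < C ∧
      ∀ f : ℝ → En n, ContDiff ℝ (⊤ : ℕ∞) f →
        (∀ x ∈ Set.Icc (0:ℝ) 1, deriv f x ≠ 0) →
        sNk f k (curv f) ≤ C * (sN f 2 k (curv f) + sN f 2 0 (curv f)) :=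
  sobolev_norm_curvature_bound_general n k

end
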